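/- Let n ≥ 2 and let Γ satisfy condition (C) with λ* := (1,−1,…,−1) ∉ closure(Γ) and eₙ := (0,…,0,1) ∉ ∂Γ, i.e. 1 < μ_Γ⁻ < ∞. Then there exists no function v ∈ C²(closure(ℝⁿ₊)) depending only on the variable xₙ that satisfies both λ(A[v]) ∈ Γ on closure(ℝⁿ₊) and ∂v/∂xₙ(0) ≤ 0. -/

import Mathlib

noncomputable section

open Filter Metric Polynomial MeasureTheory
open scoped Topology

namespace CLL

abbrev E (d : ℕ) := EuclideanSpace ℝ (Fin d)

/-- One-sided partial derivative (within a set `s`) in the `i`-th coordinate direction. -/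
def pd (d : ℕ) (s : Set (E d)) (v : E d → ℝ) (i : Fin d) (x : E d) : ℝ :=
  fderivWithin ℝ v s x (EuclideanSpace.single i 1)

/-- The Möbius Hessian `A[v] = e^{-2v} (-∇² v + ∇v ⊗ ∇v - |∇v|²/2 · I)`,
computed with derivatives within `s`. -/
def mHess (d : ℕ) (s : Set (E d)) (v : E d → ℝ) (x : E d) : Matrix (Fin d) (Fin d) ℝ :=
  fun i j =>
    Real.exp (-2 * v x) *
      (-(pd d s (fun y => pd d s v j y) i x)
        + pd d s v i x * pd d s v j x
        - (1 / 2) * (∑ k, (pd d s v k x) ^ 2) * (if i = j then (1 : ℝ) else 0))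

/-- `μ` lists the eigenvalues (with multiplicity, in some order) of the matrix `M`. -/
def IsEigList (d : ℕ) (M : Matrix (Fin d) (Fin d) ℝ) (μ : Fin d → ℝ) : Prop :=
  M.charpoly = ∏ i, (X - C (μ i))

/-- `λ* = (1, -1, …, -1)`. -/
def lamStar (d : ℕ) : Fin d → ℝ := fun i => if (i : ℕ) = 0 then 1 else -1

/-- Condition (C): `Γ ⊊ ℝⁿ` is a nonempty open symmetric cone with vertex at the origin
satisfying `Γ + Γₙ ⊆ Γ`. -/
def CondC (d : ℕ) (Γ : Set (Fin d → ℝ)) : Prop :=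
  Γ.Nonempty ∧ Γ ≠ Set.univ ∧ IsOpen Γ ∧
    (∀ t : ℝ, 0 < t → ∀ lam ∈ Γ, t • lam ∈ Γ) ∧
    (∀ σ : Equiv.Perm (Fin d), ∀ lam ∈ Γ, lam ∘ σ ∈ Γ) ∧
    (∀ lam ∈ Γ, ∀ μ : Fin d → ℝ, (∀ i, 0 < μ i) → lam + μ ∈ Γ)

/-- Condition (F): `f` is symmetric on `Γ`, locally Lipschitz, and for each compact
`K ⊆ Γ` its partial derivatives are bounded below a.e. on `K` by a positive constant. -/
def CondF (d : ℕ) (Γ : Set (Fin d → ℝ)) (f : (Fin d → ℝ) → ℝ) : Prop :=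
  (∀ σ : Equiv.Perm (Fin d), ∀ lam ∈ Γ, f (lam ∘ σ) = f lam) ∧
  (∀ lam ∈ Γ, ∃ K : NNReal, ∃ t ∈ nhdsWithin lam Γ, LipschitzOnWith K f t) ∧
  (∀ K : Set (Fin d → ℝ), K ⊆ Γ → IsCompact K →
    ∃ c > (0 : ℝ), ∀ᵐ lam ∂(volume.restrict K),
      ∀ i : Fin d, c ≤ lineDeriv ℝ f lam (Pi.single i 1))

/-- The index of the last coordinate. -/
def lastIdx (n : ℕ) : Fin (n + 2) := Fin.last (n + 1)

/-- The open upper half space `ℝⁿ₊`. -/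
def upperH (n : ℕ) : Set (E (n + 2)) := {x | 0 < x (lastIdx n)}

/-- The standard bubble `log (a / (1 + b |x - x̄|²))`. -/
def bubble (n : ℕ) (a b : ℝ) (xbar : E (n + 2)) (x : E (n + 2)) : ℝ :=
  Real.log (a / (1 + b * ‖x - xbar‖ ^ 2))

/-- The open upper half ball `B_r⁺`. -/
def Bplus (n : ℕ) (r : ℝ) : Set (E (n + 2)) := Metric.ball 0 r ∩ upperH n

/-- The set defining `μ_Γ⁻`. -/
def muSet (d : ℕ) (Γ : Set (Fin d → ℝ)) : Set ℝ :=
  {c : ℝ | (fun i : Fin d => if (i : ℕ) = 0 then c else -1) ∈ closure Γ}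

/-- `μ_Γ⁻ = inf { c : (c,-1,…,-1) ∈ closure Γ }`. -/
def muMinus (d : ℕ) (Γ : Set (Fin d → ℝ)) : ℝ :=
  sInf (muSet d Γ)

end CLL

open CLL

/-
Writing `v x = w xₙ`, the Möbius Hessian is diagonal, with one entry
`e^{-2w} (-w'' + w'²/2)` and `n - 1` entries `-e^{-2w} w'²/2 ≤ 0`. Rescaling and permuting,
membership of these eigenvalues in `Γ` puts `(a/(-b), -1, …, -1)` in `Γ` (after a small
perturbation, using openness of `Γ`, when `b = 0`), so `a ≥ μ_Γ⁻ · (-b)` with `μ_Γ⁻ > 1`. This is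
the Riccati inequality `w'' ≤ -((μ_Γ⁻ - 1)/2) w'²` together with `w'' < 0`. Since `w'(0) ≤ 0`,
`w'` is negative on `[1, ∞)`, and there `1/w'` increases at rate at least `(μ_Γ⁻ - 1)/2` while
staying negative, which is impossible.
-/

namespace CLL

open Set Function

lemma false_of_hasDerivAt_le_neg_mul_sq {f f' : ℝ → ℝ} {δ : ℝ} (hδ : 0 < δ)
    (hf : ContinuousOn f (Ici 0)) (hderiv : ∀ t > 0, HasDerivAt f (f' t) t) (h0 : f 0 ≤ 0)
    (hneg : ∀ t > 0, f' t < 0) (hle : ∀ t > 0, f' t ≤ -δ * f t ^ 2) : False := by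
  have hanti : StrictAntiOn f (Ici 0) :=
    strictAntiOn_of_deriv_neg (convex_Ici 0) hf fun t ht => by
      rw [interior_Ici] at ht
      exact (hderiv t ht).deriv ▸ hneg t ht
  have hneg_f : ∀ t ∈ Ici (1 : ℝ), f t < 0 := fun t (ht : 1 ≤ t) =>
    (hanti self_mem_Ici (mem_Ici.2 (by linarith)) (by linarith)).trans_le h0
  have hinv : ∀ t ∈ interior (Ici (1 : ℝ)),
      HasDerivAt (fun s => (f s)⁻¹) (-f' t / f t ^ 2) t ∧ δ ≤ -f' t / f t ^ 2 := by
    intro t ht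
    rw [interior_Ici] at ht
    have ht0 : (0 : ℝ) < t := zero_lt_one.trans ht
    have hft := hneg_f t (mem_Ici.2 ht.le)
    refine ⟨(hderiv t ht0).fun_inv hft.ne, ?_⟩
    rw [le_div_iff₀ (sq_pos_of_ne_zero hft.ne)]
    linarith [hle t ht0]
  have hgrow := (convex_Ici (1 : ℝ)).mul_sub_le_image_sub_of_le_deriv (f := fun s => (f s)⁻¹)
    ((hf.mono (Ici_subset_Ici.2 zero_le_one)).inv₀ fun t ht => (hneg_f t ht).ne)
    (fun t ht => (hinv t ht).1.differentiableAt.differentiableWithinAt)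
    (fun t ht => (hinv t ht).1.deriv ▸ (hinv t ht).2)
  have hf1 : (f 1)⁻¹ < 0 := inv_lt_zero.2 (hneg_f 1 self_mem_Ici)
  set T := 1 - (f 1)⁻¹ / δ
  have hT : 1 ≤ T := by linarith [div_neg_of_neg_of_pos hf1 hδ]
  have hδT : δ * (T - 1) = -(f 1)⁻¹ := by simp only [T]; field_simp; ring
  linarith [hgrow 1 self_mem_Ici T hT hT, inv_lt_zero.2 (hneg_f T hT)]

lemma exists_perm_comp_eq_of_map_univ_eq {α : Type*} [LinearOrder α] {d : ℕ} {f g : Fin d → α}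
    (h : Multiset.map f Finset.univ.val = Multiset.map g Finset.univ.val) :
    ∃ σ : Equiv.Perm (Fin d), f ∘ σ = g := by
  have hperm : (List.ofFn (f ∘ Tuple.sort f) : Multiset α)
      = (List.ofFn (g ∘ Tuple.sort g) : Multiset α) := by
    rw [Multiset.coe_eq_coe.mpr ((Tuple.sort f).ofFn_comp_perm f),
        Multiset.coe_eq_coe.mpr ((Tuple.sort g).ofFn_comp_perm g)]
    rw [Fin.univ_val_map, Fin.univ_val_map] at h
    exact_mod_cast h
  have hsorted : f ∘ Tuple.sort f = g ∘ Tuple.sort g := List.ofFn_injective <|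
    List.Perm.eq_of_sortedLE (Tuple.monotone_sort f).sortedLE_ofFn
      (Tuple.monotone_sort g).sortedLE_ofFn (Multiset.coe_eq_coe.mp hperm)
  refine ⟨(Tuple.sort g)⁻¹.trans (Tuple.sort f), funext fun i => ?_⟩
  simpa using congrFun hsorted ((Tuple.sort g)⁻¹ i)

lemma exists_perm_comp_eq_of_isEigList_diagonal {d : ℕ} {D ev : Fin d → ℝ}
    (h : IsEigList d (Matrix.diagonal D) ev) : ∃ σ : Equiv.Perm (Fin d), ev ∘ σ = D := by
  apply exists_perm_comp_eq_of_map_univ_eq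
  have := congrArg Polynomial.roots h
  rw [Matrix.charpoly_diagonal, Polynomial.roots_prod _ _ (by
      simp [Finset.prod_ne_zero_iff, Polynomial.X_sub_C_ne_zero]), Polynomial.roots_prod _ _ (by
      simp [Finset.prod_ne_zero_iff, Polynomial.X_sub_C_ne_zero])] at this
  simpa using this.symm

lemma mem_of_isEigList_diagonal_smul {d : ℕ} {Γ : Set (Fin d → ℝ)}
    (hscale : ∀ t : ℝ, 0 < t → ∀ lam ∈ Γ, t • lam ∈ Γ)
    (hperm : ∀ σ : Equiv.Perm (Fin d), ∀ lam ∈ Γ, lam ∘ σ ∈ Γ) {c : ℝ} {D ev : Fin d → ℝ}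
    (hc : 0 < c) (h : IsEigList d (Matrix.diagonal (c • D)) ev) (hev : ev ∈ Γ) : D ∈ Γ := by
  obtain ⟨σ, hσ⟩ := exists_perm_comp_eq_of_isEigList_diagonal h
  have := hscale _ (inv_pos.2 hc) _ (hσ ▸ hperm σ ev hev)
  rwa [inv_smul_smul₀ hc.ne'] at this

section Cone

variable {d : ℕ} {Γ : Set (Fin d → ℝ)}

lemma add_mem_closure_of_nonneg
    (hadd : ∀ lam ∈ Γ, ∀ μ : Fin d → ℝ, (∀ i, 0 < μ i) → lam + μ ∈ Γ)
    {y μ : Fin d → ℝ} (hy : y ∈ closure Γ) (hμ : 0 ≤ μ) : y + μ ∈ closure Γ := by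
  have hpos : ∀ ε : ℝ, 0 < ε → y + (μ + ε • 1) ∈ closure Γ := fun ε hε =>
    map_mem_closure (f := (· + (μ + ε • 1))) (continuous_add_const _) hy fun z hz =>
      hadd z hz _ fun i => by simpa using add_pos_of_nonneg_of_pos (hμ i) hε
  have hlim : Tendsto (fun ε : ℝ => y + (μ + ε • 1)) (𝓝[>] 0) (𝓝 (y + μ)) := by
    have : Continuous fun ε : ℝ => y + (μ + ε • (1 : Fin d → ℝ)) := by fun_prop
    simpa using (this.tendsto 0).mono_left nhdsWithin_le_nhds
  exact isClosed_closure.mem_of_tendsto hlim (eventually_nhdsWithin_of_forall hpos)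

lemma mem_muSet_of_le (hadd : ∀ lam ∈ Γ, ∀ μ : Fin d → ℝ, (∀ i, 0 < μ i) → lam + μ ∈ Γ)
    {c c' : ℝ} (hc : c ∈ muSet d Γ) (hcc' : c ≤ c') : c' ∈ muSet d Γ := by
  have h := add_mem_closure_of_nonneg hadd hc
    (μ := fun i => if (i : ℕ) = 0 then c' - c else 0) fun i => by
      simp only [Pi.zero_apply]; split_ifs <;> linarith
  show _ ∈ closure Γ
  convert h using 2 with i
  simp only [Pi.add_apply]
  split_ifs <;> ring

lemma isClosed_muSet (Γ : Set (Fin d → ℝ)) : IsClosed (muSet d Γ) :=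
  isClosed_closure.preimage <| continuous_pi fun i => by
    by_cases h : (i : ℕ) = 0 <;> simp only [h, if_true, if_false] <;> fun_prop

lemma one_lt_of_mem_muSet (hadd : ∀ lam ∈ Γ, ∀ μ : Fin d → ℝ, (∀ i, 0 < μ i) → lam + μ ∈ Γ)
    (hstar : lamStar d ∉ closure Γ) {c : ℝ} (hc : c ∈ muSet d Γ) : 1 < c :=
  lt_of_not_ge fun h => hstar (mem_muSet_of_le hadd hc h)

lemma bddBelow_muSet (hadd : ∀ lam ∈ Γ, ∀ μ : Fin d → ℝ, (∀ i, 0 < μ i) → lam + μ ∈ Γ)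
    (hstar : lamStar d ∉ closure Γ) : BddBelow (muSet d Γ) :=
  ⟨1, fun _ hc => (one_lt_of_mem_muSet hadd hstar hc).le⟩

lemma one_lt_muMinus (hadd : ∀ lam ∈ Γ, ∀ μ : Fin d → ℝ, (∀ i, 0 < μ i) → lam + μ ∈ Γ)
    (hstar : lamStar d ∉ closure Γ) (hne : (muSet d Γ).Nonempty) : 1 < muMinus d Γ :=
  one_lt_of_mem_muSet hadd hstar ((isClosed_muSet Γ).csInf_mem hne (bddBelow_muSet hadd hstar))

lemma div_neg_mem_muSet (hscale : ∀ t : ℝ, 0 < t → ∀ lam ∈ Γ, t • lam ∈ Γ)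
    (hperm : ∀ σ : Equiv.Perm (Fin d), ∀ lam ∈ Γ, lam ∘ σ ∈ Γ) {ℓ : Fin d} {a b : ℝ}
    (hb : b < 0) (h : Function.update (fun _ => b) ℓ a ∈ Γ) : a / -b ∈ muSet d Γ := by
  let i₀ : Fin d := ⟨0, ℓ.pos⟩
  have hvec : ((-b)⁻¹ • Function.update (fun _ => b) ℓ a) ∘ Equiv.swap i₀ ℓ
      = fun i : Fin d => if (i : ℕ) = 0 then a / -b else -1 := by
    funext i
    by_cases hi : (i : ℕ) = 0
    · have : i = i₀ := Fin.ext hi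
      subst this
      simp [div_eq_inv_mul, i₀]
    · have : Equiv.swap i₀ ℓ i ≠ ℓ := by
        rw [Ne, Equiv.swap_apply_eq_iff, Equiv.swap_apply_right]
        exact fun h => hi (by rw [h])
      simp [hi, this, hb.ne]
  exact subset_closure (hvec ▸ hperm _ _ (hscale _ (by simpa using hb) _ h))

lemma exists_neg_update_mem (hopen : IsOpen Γ) {ℓ : Fin d} {a : ℝ}
    (h : Function.update (fun _ => 0) ℓ a ∈ Γ) : ∃ b < 0, Function.update (fun _ => b) ℓ a ∈ Γ := by
  have hcont : Continuous fun b : ℝ => Function.update (fun _ : Fin d => b) ℓ a := by fun_prop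
  have hev := ((hcont.tendsto 0).eventually (hopen.mem_nhds h)).filter_mono
    (nhdsWithin_le_nhds (s := Iio 0))
  obtain ⟨b, hbΓ, hb⟩ := (hev.and self_mem_nhdsWithin).exists
  exact ⟨b, hb, hbΓ⟩

lemma muMinus_mul_neg_le_of_update_mem (hopen : IsOpen Γ)
    (hscale : ∀ t : ℝ, 0 < t → ∀ lam ∈ Γ, t • lam ∈ Γ)
    (hperm : ∀ σ : Equiv.Perm (Fin d), ∀ lam ∈ Γ, lam ∘ σ ∈ Γ)
    (hadd : ∀ lam ∈ Γ, ∀ μ : Fin d → ℝ, (∀ i, 0 < μ i) → lam + μ ∈ Γ)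
    (hstar : lamStar d ∉ closure Γ) {ℓ : Fin d} {a b : ℝ} (hb : b ≤ 0)
    (h : Function.update (fun _ => b) ℓ a ∈ Γ) : muMinus d Γ * -b ≤ a ∧ 0 < a := by
  have hneg : ∀ b' < 0, Function.update (fun _ => b') ℓ a ∈ Γ →
      muMinus d Γ * -b' ≤ a ∧ -b' < a := by
    intro b' hb' h'
    have hc := div_neg_mem_muSet hscale hperm hb' h'
    have hnb : 0 < -b' := neg_pos.2 hb'
    exact ⟨(le_div_iff₀ hnb).1 (csInf_le (bddBelow_muSet hadd hstar) hc),
      by simpa using (lt_div_iff₀ hnb).1 (one_lt_of_mem_muSet hadd hstar hc)⟩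
  rcases hb.lt_or_eq with hb | rfl
  · obtain ⟨hle, hlt⟩ := hneg b hb h
    exact ⟨hle, by linarith⟩
  · obtain ⟨b', hb', h'⟩ := exists_neg_update_mem hopen h
    have ha : 0 < a := by linarith [(hneg b' hb' h').2]
    exact ⟨by simpa using ha.le, ha⟩

lemma le_neg_mul_sq_of_update_mem (hopen : IsOpen Γ)
    (hscale : ∀ t : ℝ, 0 < t → ∀ lam ∈ Γ, t • lam ∈ Γ)
    (hperm : ∀ σ : Equiv.Perm (Fin d), ∀ lam ∈ Γ, lam ∘ σ ∈ Γ)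
    (hadd : ∀ lam ∈ Γ, ∀ μ : Fin d → ℝ, (∀ i, 0 < μ i) → lam + μ ∈ Γ)
    (hstar : lamStar d ∉ closure Γ) (hne : (muSet d Γ).Nonempty) {ℓ : Fin d} {p q : ℝ}
    (h : Function.update (fun _ => -p ^ 2 / 2) ℓ (-q + p ^ 2 / 2) ∈ Γ) :
    q ≤ -((muMinus d Γ - 1) / 2) * p ^ 2 ∧ q < 0 := by
  obtain ⟨hle, hpos⟩ := muMinus_mul_neg_le_of_update_mem hopen hscale hperm hadd hstar
    (by nlinarith) h
  have hm := one_lt_muMinus hadd hstar hne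
  refine ⟨by linarith, ?_⟩
  rcases eq_or_ne p 0 with rfl | hp
  · linarith
  · nlinarith [sq_pos_of_ne_zero hp]

end Cone

lemma contDiff_euclideanSpace_single {d : ℕ} (ℓ : Fin d) {k : WithTop ℕ∞} :
    ContDiff ℝ k (fun t : ℝ => EuclideanSpace.single ℓ t) := by
  have : (fun t : ℝ => EuclideanSpace.single ℓ t) =
      fun t => t • EuclideanSpace.single ℓ (1 : ℝ) := by
    ext t i
    simp
  rw [this]
  fun_prop

lemma closure_upperH (n : ℕ) : closure (upperH n) = {x | 0 ≤ x (lastIdx n)} := by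
  let π := EuclideanSpace.proj (𝕜 := ℝ) (lastIdx n)
  have hsurj : Surjective π := fun t => ⟨EuclideanSpace.single (lastIdx n) t, by simp [π]⟩
  have h := (π.isOpenMap hsurj).preimage_closure_eq_closure_preimage π.continuous (Ioi 0)
  rw [closure_Ioi] at h
  exact h.symm

lemma mapsTo_closure_upperH (n : ℕ) :
    MapsTo (fun x : E (n + 2) => x (lastIdx n)) (closure (upperH n)) (Ici 0) := fun x hx => by
  rwa [closure_upperH] at hx

lemma single_mem_closure_upperH {n : ℕ} {t : ℝ} (ht : 0 ≤ t) :
    EuclideanSpace.single (lastIdx n) t ∈ closure (upperH n) := by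
  simpa [closure_upperH] using ht

lemma uniqueDiffOn_closure_upperH (n : ℕ) : UniqueDiffOn ℝ (closure (upperH n)) := by
  refine uniqueDiffOn_convex ?_ ⟨EuclideanSpace.single (lastIdx n) 1, ?_⟩
  · rw [closure_upperH]
    exact convex_halfSpace_ge (EuclideanSpace.proj (𝕜 := ℝ) (lastIdx n)).isLinear 0
  · have hopen : IsOpen (upperH n) :=
      isOpen_lt continuous_const (EuclideanSpace.proj (𝕜 := ℝ) (lastIdx n)).continuous
    refine interior_mono subset_closure (hopen.interior_eq.symm ▸ ?_)
    simp [upperH]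

section Profile

variable {d : ℕ} {s : Set (E d)} {T : Set ℝ} {ℓ : Fin d}

lemma pd_eq_of_eqOn_comp_apply {u : E d → ℝ} {g : ℝ → ℝ} {g' : ℝ} {x : E d}
    (hs : UniqueDiffWithinAt ℝ s x) (hx : x ∈ s) (hmaps : MapsTo (fun y : E d => y ℓ) s T)
    (hu : EqOn u (fun y => g (y ℓ)) s) (hg : HasDerivWithinAt g g' T (x ℓ)) (i : Fin d) :
    pd d s u i x = if i = ℓ then g' else 0 := by
  have hπ := (EuclideanSpace.proj (𝕜 := ℝ) ℓ).hasFDerivWithinAt (s := s) (x := x)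
  have hu' := (hg.comp_hasFDerivWithinAt x hπ hmaps).congr' hu hx
  rw [pd, hu'.fderivWithin hs]
  by_cases h : i = ℓ <;> simp [h, Ne.symm]

lemma mHess_eq_diagonal_of_eqOn_comp_apply {v : E d → ℝ} {w : ℝ → ℝ} {x : E d}
    (hs : UniqueDiffOn ℝ s) (hT : UniqueDiffOn ℝ T) (hmaps : MapsTo (fun y : E d => y ℓ) s T)
    (hw : ContDiffOn ℝ 2 w T) (hv : EqOn v (fun y => w (y ℓ)) s) (hx : x ∈ s) :
    mHess d s v x = Matrix.diagonal (Real.exp (-2 * w (x ℓ)) •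
      Function.update (fun _ => -derivWithin w T (x ℓ) ^ 2 / 2) ℓ
        (-derivWithin (derivWithin w T) T (x ℓ) + derivWithin w T (x ℓ) ^ 2 / 2)) := by
  set w' := derivWithin w T
  set w'' := derivWithin w' T
  have hw' : DifferentiableOn ℝ w' T :=
    (hw.derivWithin hT (m := 1) (by norm_num)).differentiableOn (by norm_num)
  have hpd : ∀ y ∈ s, ∀ j, pd d s v j y = if j = ℓ then w' (y ℓ) else 0 := fun y hy =>
    pd_eq_of_eqOn_comp_apply (hs y hy) hy hmaps hv
      ((hw.differentiableOn (by norm_num) _ (hmaps hy)).hasDerivWithinAt)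
  have hpd2 : ∀ i j, pd d s (pd d s v j) i x = if i = ℓ ∧ j = ℓ then w'' (x ℓ) else 0 := by
    intro i j
    by_cases hj : j = ℓ
    · subst hj
      rw [pd_eq_of_eqOn_comp_apply (hs x hx) hx hmaps (fun y hy => by simp [hpd y hy])
        (hw' _ (hmaps hx)).hasDerivWithinAt]
      simp [w'']
    · rw [pd_eq_of_eqOn_comp_apply (g := fun _ => 0) (hs x hx) hx hmaps
        (fun y hy => by simp [hpd y hy, hj]) (hasDerivWithinAt_const _ _ 0)]
      simp [hj]
  ext i j
  simp only [mHess, hpd x hx, hpd2, hv hx, Matrix.diagonal_apply, ite_pow,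
    Pi.smul_apply, smul_eq_mul, Function.update_apply]
  split_ifs <;> simp_all <;> ring

end Profile

end CLL

/-- No one-variable function with `λ(A[v]) ∈ Γ` and nonpositive normal derivative at the
boundary, when `1 < μ_Γ⁻ < ∞` (discussion below Lemma 4.1 of the paper). -/
theorem stmt14 (n : ℕ) (Γ : Set (Fin (n + 2) → ℝ)) (hC : CondC (n + 2) Γ)
    (hstar : lamStar (n + 2) ∉ closure Γ) (hne : (muSet (n + 2) Γ).Nonempty)
    (v : E (n + 2) → ℝ) (hv : ContDiffOn ℝ 2 v (closure (upperH n)))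
    (hdep : ∀ x ∈ closure (upperH n),
      v x = v (EuclideanSpace.single (lastIdx n) (x (lastIdx n))))
    (heig : ∀ x ∈ closure (upperH n), ∃ ev : Fin (n + 2) → ℝ,
      IsEigList (n + 2) (mHess (n + 2) (closure (upperH n)) v x) ev ∧ ev ∈ Γ)
    (hder : pd (n + 2) (closure (upperH n)) v (lastIdx n) 0 ≤ 0) :
    False := by
  obtain ⟨-, -, hopen, hscale, hperm, hadd⟩ := hC
  set ℓ := lastIdx n
  set w : ℝ → ℝ := fun t => v (EuclideanSpace.single ℓ t)
  set w' := derivWithin w (Set.Ici 0)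
  have hw : ContDiffOn ℝ 2 w (Set.Ici 0) :=
    hv.comp (contDiff_euclideanSpace_single ℓ).contDiffOn fun _ => single_mem_closure_upperH
  have hw' : ContDiffOn ℝ 1 w' (Set.Ici 0) := hw.derivWithin (uniqueDiffOn_Ici 0) le_rfl
  have hode : ∀ t > 0, derivWithin w' (Set.Ici 0) t ≤ -((muMinus (n + 2) Γ - 1) / 2) * w' t ^ 2 ∧
      derivWithin w' (Set.Ici 0) t < 0 := fun t ht => by
    have hx := single_mem_closure_upperH (n := n) ht.le
    obtain ⟨ev, hev, hevΓ⟩ := heig _ hx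
    rw [mHess_eq_diagonal_of_eqOn_comp_apply (uniqueDiffOn_closure_upperH n) (uniqueDiffOn_Ici 0)
      (mapsTo_closure_upperH n) hw hdep hx] at hev
    simpa using le_neg_mul_sq_of_update_mem hopen hscale hperm hadd hstar hne
      (mem_of_isEigList_diagonal_smul hscale hperm (Real.exp_pos _) hev hevΓ)
  have hw'0 : w' 0 ≤ 0 := by
    have h0 : (0 : E (n + 2)) ∈ closure (upperH n) := by simp [closure_upperH]
    rwa [pd_eq_of_eqOn_comp_apply (uniqueDiffOn_closure_upperH n 0 h0) h0 (mapsTo_closure_upperH n)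
      (g := w) hdep (hw.differentiableOn two_ne_zero 0 Set.self_mem_Ici).hasDerivWithinAt,
      if_pos rfl] at hder
  exact false_of_hasDerivAt_le_neg_mul_sq (by linarith [one_lt_muMinus hadd hstar hne])
    hw'.continuousOn
    (fun t ht => (hw'.differentiableOn one_ne_zero t ht.le).hasDerivWithinAt.hasDerivAt
      (Ici_mem_nhds ht))
    hw'0 (fun t ht => (hode t ht).2) (fun t ht => (hode t ht).1)
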